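/- arXiv:1805.00075 — 3 statements merged into one kernel-verified Lean document; each statement's English description precedes it below -/
import Mathlib

section
/- For every integer k ≥ 0 there exists a constant C_k > 0 such that for all sufficiently large real x one has |g_k(x) − c_k/x^{k+1}| ≤ C_k/x^{k+2}; that is, g_k(x) = c_k/x^{k+1} + O_k(x^{−k−2}) as x → ∞. -/
/-- Thue–Morse signs: `tmSign n = ε_n = (-1)^{t_n}`, where `t_n` is the parity of
the number of ones in the binary representation of `n`. -/
noncomputable def tmSign (n : ℕ) : ℝ := (-1 : ℝ) ^ (Nat.digits 2 n).sum

/-- `gFun k x = g_k(x) = ∑_{0 ≤ ℓ < 2^k} ε_ℓ / (x + ℓ)`. -/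
noncomputable def gFun (k : ℕ) (x : ℝ) : ℝ :=
  ∑ ℓ ∈ Finset.range (2 ^ k), tmSign ℓ / (x + ℓ)

/-- `cConst k = c_k = 2^{k(k-1)/2} k!`. -/
noncomputable def cConst (k : ℕ) : ℝ := 2 ^ (k * (k - 1) / 2) * Nat.factorial k

/-!
Expanding `1/(x + ℓ)` in powers of `ℓ/x` writes `g_k(x)` as `∑_j (-1)^j S_k(j)/x^{j+1}` plus a
remainder of order `x^{-k-2}`, where `S_k(j) = ∑_{ℓ < 2^k} ε_ℓ ℓ^j`. Since `ε_{ℓ+2^k} = -ε_ℓ`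
for `ℓ < 2^k`, passing from `k` to `k + 1` applies the difference operator `f ↦ f(ℓ) - f(ℓ+2^k)`,
which lowers degrees by one and multiplies leading coefficients by `-j 2^k`. Hence `S_k(j) = 0`
for `j < k` and `S_k(k) = (-1)^k c_k`.
-/

lemma digits_two_sum_add_two_pow {k ℓ : ℕ} (h : ℓ < 2 ^ k) :
    (Nat.digits 2 (ℓ + 2 ^ k)).sum = (Nat.digits 2 ℓ).sum + 1 := by
  have hlen : (Nat.digits 2 ℓ).length ≤ k := (Nat.digits_length_le_iff one_lt_two ℓ).2 h
  have happend := Nat.digits_append_zeroes_append_digits (b := 2)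
    (k := k - (Nat.digits 2 ℓ).length) (m := 1) (n := ℓ) one_lt_two one_pos
  rw [Nat.add_sub_cancel' hlen, mul_one] at happend
  rw [← happend]
  simp

lemma tmSign_add_two_pow {k ℓ : ℕ} (h : ℓ < 2 ^ k) : tmSign (ℓ + 2 ^ k) = -tmSign ℓ := by
  rw [tmSign, tmSign, digits_two_sum_add_two_pow h, pow_succ, mul_neg_one]

lemma sum_range_two_pow_succ_tmSign_mul (k : ℕ) (f : ℕ → ℝ) :
    ∑ ℓ ∈ Finset.range (2 ^ (k + 1)), tmSign ℓ * f ℓ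
      = ∑ ℓ ∈ Finset.range (2 ^ k), tmSign ℓ * (f ℓ - f (ℓ + 2 ^ k)) := by
  rw [pow_succ, mul_two, Finset.sum_range_add]
  simp_rw [mul_sub, Finset.sum_sub_distrib, sub_eq_add_neg, ← Finset.sum_neg_distrib]
  congr 1
  refine Finset.sum_congr rfl fun ℓ hℓ => ?_
  rw [add_comm, tmSign_add_two_pow (Finset.mem_range.1 hℓ), neg_mul]

noncomputable def tmMoment (k j : ℕ) : ℝ := ∑ ℓ ∈ Finset.range (2 ^ k), tmSign ℓ * (ℓ : ℝ) ^ j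

lemma tmMoment_succ (k j : ℕ) :
    tmMoment (k + 1) j
      = -∑ m ∈ Finset.range j, (j.choose m : ℝ) * (2 ^ k) ^ (j - m) * tmMoment k m := by
  have hbinom (ℓ : ℕ) : ((ℓ + 2 ^ k : ℕ) : ℝ) ^ j
      = ∑ m ∈ Finset.range j, (ℓ : ℝ) ^ m * (2 ^ k) ^ (j - m) * (j.choose m : ℝ) + (ℓ : ℝ) ^ j := by
    push_cast
    rw [add_pow, Finset.sum_range_succ, Nat.sub_self, pow_zero, Nat.choose_self]
    push_cast; ring
  rw [tmMoment, sum_range_two_pow_succ_tmSign_mul k fun ℓ => (ℓ : ℝ) ^ j]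
  simp only [hbinom, sub_add_cancel_right, mul_neg, Finset.sum_neg_distrib, tmMoment,
    Finset.mul_sum]
  rw [Finset.sum_comm]
  refine congrArg _ (Finset.sum_congr rfl fun m _ => Finset.sum_congr rfl fun ℓ _ => by ring)

lemma tmMoment_eq_zero {k j : ℕ} (h : j < k) : tmMoment k j = 0 := by
  induction k generalizing j with
  | zero => omega
  | succ k ih =>
    rw [tmMoment_succ, neg_eq_zero]
    exact Finset.sum_eq_zero fun m hm => by
      rw [ih (by simp at hm; omega), mul_zero]

lemma cConst_succ (k : ℕ) : cConst (k + 1) = (k + 1) * 2 ^ k * cConst k := by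
  simp only [cConst, ← Nat.choose_two_right, Nat.choose_succ_succ, Nat.choose_one_right,
    Nat.factorial_succ, pow_add]
  push_cast; ring

lemma tmMoment_self (k : ℕ) : tmMoment k k = (-1) ^ k * cConst k := by
  induction k with
  | zero => simp [tmMoment, tmSign, cConst]
  | succ k ih =>
    rw [tmMoment_succ, Finset.sum_range_succ,
      Finset.sum_eq_zero fun m hm => by rw [tmMoment_eq_zero (by simpa using hm), mul_zero],
      ih, cConst_succ, Nat.choose_succ_self_right, Nat.add_sub_cancel_left]
    push_cast; ring

lemma one_div_add_eq_sum_add {K : Type*} [Field K] {x a : K} (hx : x ≠ 0) (hxa : x + a ≠ 0)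
    (n : ℕ) :
    1 / (x + a) = ∑ j ∈ Finset.range n, (-a) ^ j / x ^ (j + 1) + (-a) ^ n / (x ^ n * (x + a)) := by
  induction n with
  | zero => simp
  | succ n ih =>
    rw [ih, Finset.sum_range_succ]
    field_simp
    ring

lemma abs_sum_div_add_sub_sum_moments_le {ι : Type*} (s : Finset ι) (w a : ι → ℝ)
    (ha : ∀ i ∈ s, 0 ≤ a i) {x : ℝ} (hx : 0 < x) (n : ℕ) :
    |∑ i ∈ s, w i / (x + a i)
        - ∑ j ∈ Finset.range n, (-1) ^ j * (∑ i ∈ s, w i * a i ^ j) / x ^ (j + 1)|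
      ≤ (∑ i ∈ s, |w i| * a i ^ n) / x ^ (n + 1) := by
  have hexpand : ∀ i ∈ s, w i / (x + a i)
      = ∑ j ∈ Finset.range n, (-1) ^ j * (w i * a i ^ j) / x ^ (j + 1)
        + w i * ((-a i) ^ n / (x ^ n * (x + a i))) := by
    intro i hi
    rw [div_eq_mul_one_div, one_div_add_eq_sum_add hx.ne' (by linarith [ha i hi]) n, mul_add,
      Finset.mul_sum]
    refine congrArg (· + _) (Finset.sum_congr rfl fun j _ => by rw [neg_pow]; ring)
  have hswap : ∑ j ∈ Finset.range n, (-1) ^ j * (∑ i ∈ s, w i * a i ^ j) / x ^ (j + 1)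
      = ∑ i ∈ s, ∑ j ∈ Finset.range n, (-1) ^ j * (w i * a i ^ j) / x ^ (j + 1) := by
    rw [Finset.sum_comm]
    simp_rw [Finset.mul_sum, Finset.sum_div]
  have hterm : ∀ i ∈ s,
      |w i * ((-a i) ^ n / (x ^ n * (x + a i)))| ≤ |w i| * a i ^ n / x ^ (n + 1) := by
    intro i hi
    have hai := ha i hi
    have hxa : x ^ (n + 1) ≤ x ^ n * (x + a i) := by
      rw [pow_succ]
      exact mul_le_mul_of_nonneg_left (by linarith) (by positivity)
    rw [abs_mul, abs_div, abs_pow, abs_neg, abs_of_nonneg hai,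
      abs_of_pos (by positivity : 0 < x ^ n * (x + a i)), ← mul_div_assoc]
    exact div_le_div_of_nonneg_left (by positivity) (by positivity) hxa
  rw [Finset.sum_congr rfl hexpand, Finset.sum_add_distrib, hswap, add_sub_cancel_left,
    Finset.sum_div]
  exact (Finset.abs_sum_le_sum_abs _ _).trans (Finset.sum_le_sum hterm)

/-- for every `k ≥ 0` there is `C_k > 0` such that for all sufficiently
large `x`, `|g_k(x) - c_k/x^{k+1}| ≤ C_k/x^{k+2}`. -/
theorem stmt_4 (k : ℕ) :
    ∃ C : ℝ, 0 < C ∧ ∃ x₀ : ℝ, ∀ x : ℝ, x₀ ≤ x →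
      |gFun k x - cConst k / x ^ (k + 1)| ≤ C / x ^ (k + 2) := by
  set B : ℝ := ∑ ℓ ∈ Finset.range (2 ^ k), |tmSign ℓ| * (ℓ : ℝ) ^ (k + 1)
  refine ⟨B + 1, by positivity, 1, fun x hx => ?_⟩
  have hx0 : 0 < x := by linarith
  have hleading : ∑ j ∈ Finset.range (k + 1), (-1) ^ j * tmMoment k j / x ^ (j + 1)
      = cConst k / x ^ (k + 1) := by
    rw [Finset.sum_range_succ,
      Finset.sum_eq_zero fun j hj => by rw [tmMoment_eq_zero (by simpa using hj)]; simp,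
      zero_add, tmMoment_self, ← mul_assoc, ← pow_add, Even.neg_one_pow ⟨k, rfl⟩, one_mul]
  calc |gFun k x - cConst k / x ^ (k + 1)|
      = |∑ ℓ ∈ Finset.range (2 ^ k), tmSign ℓ / (x + ℓ)
          - ∑ j ∈ Finset.range (k + 1), (-1) ^ j * tmMoment k j / x ^ (j + 1)| := by
        rw [hleading, gFun]
    _ ≤ B / x ^ (k + 2) := abs_sum_div_add_sub_sum_moments_le _ _ _
        (fun ℓ _ => Nat.cast_nonneg ℓ) hx0 (k + 1)
    _ ≤ (B + 1) / x ^ (k + 2) := by gcongr; linarith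
end

section
/- Let k ≥ 1 be an integer, let r be an integer with 0 < r < 2^k, and let x be a real number with x ≥ 2^{k+1}·(k+1). Then the sign of ∑_{0 ≤ ℓ < r} ε_ℓ/(x+ℓ) equals −ε_r; that is, this sum is strictly positive if ε_r = −1 and strictly negative if ε_r = +1. -/
open Finset
open scoped Nat

lemma tmSign_eq_neg_one_pow_mul (n : ℕ) : tmSign n = (-1) ^ (n % 2) * tmSign (n / 2) := by
  rcases Nat.eq_zero_or_pos n with rfl | hn
  · simp [tmSign]
  · rw [tmSign, tmSign, Nat.digits_def' one_lt_two hn, List.sum_cons, pow_add]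

lemma tmSign_two_pow_mul_add (j q s : ℕ) (hs : s < 2 ^ j) :
    tmSign (2 ^ j * q + s) = tmSign q * tmSign s := by
  induction j generalizing s with
  | zero => simp_all [tmSign]
  | succ j ih =>
    have hmod : (2 ^ (j + 1) * q + s) % 2 = s % 2 := by rw [pow_succ', mul_assoc]; omega
    have hdiv : (2 ^ (j + 1) * q + s) / 2 = 2 ^ j * q + s / 2 := by
      rw [pow_succ', mul_assoc]; omega
    rw [tmSign_eq_neg_one_pow_mul, hmod, hdiv, ih _ (by rw [pow_succ] at hs; omega),
      tmSign_eq_neg_one_pow_mul s]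
    ring

lemma tmSign_two_pow (j : ℕ) : tmSign (2 ^ j) = -1 := by
  simpa [tmSign] using tmSign_two_pow_mul_add j 1 0 (by positivity)

lemma tmSign_mul_self (n : ℕ) : tmSign n * tmSign n = 1 := by
  rw [tmSign, ← mul_pow]; norm_num

lemma abs_tmSign (n : ℕ) : |tmSign n| = 1 := by
  rw [tmSign, abs_pow, abs_neg, abs_one, one_pow]

lemma sum_tmSign_mul_pow (a : ℕ) (u : ℝ) :
    ∑ s ∈ range (2 ^ a), tmSign s * u ^ s = ∏ i ∈ range a, (1 - u ^ 2 ^ i) := by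
  induction a with
  | zero => simp [tmSign]
  | succ a ih =>
    have hblock : ∀ s ∈ range (2 ^ a),
        tmSign (2 ^ a + s) * u ^ (2 ^ a + s) = -(u ^ 2 ^ a * (tmSign s * u ^ s)) := by
      intro s hs
      rw [← mul_one (2 ^ a), tmSign_two_pow_mul_add a 1 s (mem_range.mp hs), mul_one,
        ← pow_zero 2, tmSign_two_pow, pow_add]
      ring
    rw [pow_succ, mul_two, sum_range_add, sum_congr rfl hblock, sum_neg_distrib, ← mul_sum, ih,
      prod_range_succ]
    ring

noncomputable def tmSum (y : ℝ) (r : ℕ) : ℝ := ∑ ℓ ∈ range r, tmSign ℓ / (y + ℓ)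

lemma tmSum_two_pow_mul_add (y : ℝ) (j q s : ℕ) (hs : s ≤ 2 ^ j) :
    tmSum y (2 ^ j * q + s) =
      tmSum y (2 ^ j * q) + tmSign q * tmSum (y + (2 ^ j * q : ℕ)) s := by
  rw [tmSum, tmSum, tmSum, sum_range_add, mul_sum]
  congr 1
  refine sum_congr rfl fun ℓ hℓ => ?_
  rw [tmSign_two_pow_mul_add j q ℓ (by simp at hℓ; omega)]
  push_cast
  ring

lemma one_sub_pow_le_mul_one_sub {u : ℝ} (hu0 : 0 ≤ u) (hu1 : u ≤ 1) (n : ℕ) :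
    1 - u ^ n ≤ n * (1 - u) := by
  rw [← mul_neg_geom_sum, mul_comm]
  refine mul_le_mul_of_nonneg_right ?_ (sub_nonneg.2 hu1)
  simpa using sum_le_card_nsmul (range n) _ 1 fun i _ => pow_le_one₀ hu0 hu1

lemma mul_pow_pred_mul_one_sub_le {u : ℝ} (hu0 : 0 ≤ u) (hu1 : u ≤ 1) (n : ℕ) :
    n * u ^ (n - 1) * (1 - u) ≤ 1 - u ^ n := by
  rw [← mul_neg_geom_sum, mul_comm]
  refine mul_le_mul_of_nonneg_left ?_ (sub_nonneg.2 hu1)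
  simpa using card_nsmul_le_sum (range n) _ (u ^ (n - 1)) fun i hi =>
    pow_le_pow_of_le_one hu0 hu1 (by simp at hi; omega)

lemma sum_range_two_pow_sub_one (a : ℕ) : ∑ i ∈ range a, (2 ^ i - 1) = 2 ^ a - 1 - a := by
  induction a with
  | zero => rfl
  | succ a ih =>
    have := a.lt_two_pow_self
    rw [sum_range_succ, ih, pow_succ]
    omega

lemma prod_one_sub_pow_two_pow_le {u : ℝ} (hu0 : 0 ≤ u) (hu1 : u ≤ 1) (a : ℕ) :
    ∏ i ∈ range a, (1 - u ^ 2 ^ i) ≤ (∏ i ∈ range a, (2 : ℝ) ^ i) * (1 - u) ^ a := by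
  calc ∏ i ∈ range a, (1 - u ^ 2 ^ i) ≤ ∏ i ∈ range a, ((2 : ℝ) ^ i * (1 - u)) :=
        prod_le_prod (fun i _ => sub_nonneg.2 (pow_le_one₀ hu0 hu1)) fun i _ => by
          exact_mod_cast one_sub_pow_le_mul_one_sub hu0 hu1 (2 ^ i)
    _ = _ := by rw [prod_mul_distrib, prod_const, card_range]

lemma le_prod_one_sub_pow_two_pow {u : ℝ} (hu0 : 0 ≤ u) (hu1 : u ≤ 1) (a : ℕ) :
    (∏ i ∈ range a, (2 : ℝ) ^ i) * (u ^ (2 ^ a - 1 - a) * (1 - u) ^ a) ≤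
      ∏ i ∈ range a, (1 - u ^ 2 ^ i) := by
  calc _ = ∏ i ∈ range a, ((2 : ℝ) ^ i * u ^ (2 ^ i - 1) * (1 - u)) := by
        rw [prod_mul_distrib, prod_mul_distrib, prod_pow_eq_pow_sum _ (fun i => 2 ^ i - 1),
          sum_range_two_pow_sub_one, prod_const, card_range, mul_assoc]
    _ ≤ _ := prod_le_prod (fun i _ => by have := sub_nonneg.2 hu1; positivity) fun i _ => by
          exact_mod_cast mul_pow_pred_mul_one_sub_le hu0 hu1 (2 ^ i)

lemma intervalIntegrable_rpow_mul {c : ℝ} (hc : -1 < c) {f : ℝ → ℝ} (hf : Continuous f)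
    (a b : ℝ) : IntervalIntegrable (fun u => u ^ c * f u) MeasureTheory.volume a b :=
  (intervalIntegral.intervalIntegrable_rpow' hc).mul_continuousOn hf.continuousOn

lemma rpow_add_natCast_of_neg_one_lt {u c : ℝ} (hu : 0 ≤ u) (hc : -1 < c) (n : ℕ) :
    u ^ (c + n) = u ^ c * u ^ n := by
  induction n with
  | zero => simp
  | succ n ih =>
    have : -1 < c + n := by linarith [n.cast_nonneg (α := ℝ)]
    rw [Nat.cast_succ, ← add_assoc, Real.rpow_add_one' hu (by linarith), ih, pow_succ, mul_assoc]

open intervalIntegral in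
lemma integral_rpow_mul_one_sub_pow (a : ℕ) {c : ℝ} (hc : -1 < c) :
    ∫ u in (0 : ℝ)..1, u ^ c * (1 - u) ^ a = a ! / ∏ t ∈ range (a + 1), (c + 1 + t) := by
  induction a generalizing c with
  | zero =>
    simp only [pow_zero, mul_one, zero_add, range_one, prod_singleton, CharP.cast_eq_zero,
      add_zero, Nat.factorial_zero, Nat.cast_one]
    rw [integral_rpow (Or.inl hc), Real.one_rpow, Real.zero_rpow (by linarith)]
    ring
  | succ a ih =>
    have hsplit : ∀ u ∈ Set.uIcc (0 : ℝ) 1,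
        u ^ c * (1 - u) ^ (a + 1) = u ^ c * (1 - u) ^ a - u ^ (c + 1) * (1 - u) ^ a := by
      intro u hu
      rw [Real.rpow_add_one' (Set.uIcc_of_le (zero_le_one (α := ℝ)) ▸ hu).1 (by linarith)]
      ring
    rw [integral_congr hsplit, integral_sub (intervalIntegrable_rpow_mul hc (by fun_prop) _ _)
      (intervalIntegrable_rpow_mul (by linarith) (by fun_prop) _ _), ih hc, ih (by linarith)]
    have hshift : ∀ t : ℕ, c + 1 + ((t + 1 : ℕ) : ℝ) = c + 1 + 1 + t := fun t => by
      push_cast; ring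
    have hQ : 0 < ∏ t ∈ range a, (c + 1 + 1 + t) := prod_pos fun t _ => by
      linarith [t.cast_nonneg (α := ℝ)]
    have hc1 : 0 < c + 1 := by linarith
    rw [prod_range_succ', prod_range_succ _ a, prod_range_succ', prod_range_succ _ a]
    simp only [hshift, Nat.factorial_succ]
    field_simp
    push_cast
    ring

lemma integral_rpow_mul_pow_mul_one_sub_pow {c : ℝ} (hc : -1 < c) (n a : ℕ) :
    ∫ u in (0 : ℝ)..1, u ^ c * (u ^ n * (1 - u) ^ a) =
      a ! / ∏ t ∈ range (a + 1), (c + n + 1 + t) := by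
  rw [← integral_rpow_mul_one_sub_pow a (by linarith [n.cast_nonneg (α := ℝ)])]
  refine intervalIntegral.integral_congr fun u hu => ?_
  rw [rpow_add_natCast_of_neg_one_lt (Set.uIcc_of_le (zero_le_one (α := ℝ)) ▸ hu).1 hc]
  ring

lemma tmSum_two_pow_eq_integral {y : ℝ} (hy : 0 < y) (a : ℕ) :
    tmSum y (2 ^ a) = ∫ u in (0 : ℝ)..1, u ^ (y - 1) * ∏ i ∈ range a, (1 - u ^ 2 ^ i) := by
  have hc : -1 < y - 1 := by linarith
  simp_rw [← sum_tmSign_mul_pow, mul_sum]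
  rw [intervalIntegral.integral_finsetSum fun s _ => ?_]
  · refine sum_congr rfl fun s _ => ?_
    have h := integral_rpow_mul_pow_mul_one_sub_pow hc s 0
    simp only [pow_zero, mul_one, Nat.factorial_zero, Nat.cast_one, zero_add, range_one,
      prod_singleton, CharP.cast_eq_zero, add_zero] at h
    rw [div_eq_mul_one_div, show y + s = y - 1 + s + 1 by ring, ← h,
      ← intervalIntegral.integral_const_mul]
    congr 1 with u
    ring
  · simp_rw [mul_left_comm _ (tmSign s)]
    exact (intervalIntegrable_rpow_mul hc (by fun_prop) _ _).const_mul _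

noncomputable def tmBlockConst (a : ℕ) : ℝ := ∏ i ∈ range a, (2 : ℝ) ^ i * (i + 1)

lemma tmBlockConst_eq (a : ℕ) : tmBlockConst a = (∏ i ∈ range a, (2 : ℝ) ^ i) * a ! := by
  rw [tmBlockConst, prod_mul_distrib, ← prod_range_add_one_eq_factorial]
  push_cast
  rfl

lemma tmBlockConst_pos (a : ℕ) : 0 < tmBlockConst a :=
  prod_pos fun i _ => by positivity

lemma tmSum_two_pow_le {y : ℝ} (hy : 0 < y) (a : ℕ) :
    tmSum y (2 ^ a) ≤ tmBlockConst a / y ^ (a + 1) := by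
  set K := ∏ i ∈ range a, (2 : ℝ) ^ i
  have hc : -1 < y - 1 := by linarith
  rw [tmSum_two_pow_eq_integral hy]
  calc _ ≤ ∫ u in (0 : ℝ)..1, u ^ (y - 1) * (K * (1 - u) ^ a) :=
        intervalIntegral.integral_mono_on zero_le_one
          (intervalIntegrable_rpow_mul hc (by fun_prop) _ _)
          (intervalIntegrable_rpow_mul hc (by fun_prop) _ _) fun u hu =>
          mul_le_mul_of_nonneg_left (prod_one_sub_pow_two_pow_le hu.1 hu.2 a)
            (Real.rpow_nonneg hu.1 _)
    _ = K * (a ! / ∏ t ∈ range (a + 1), (y + t)) := by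
        simp_rw [mul_left_comm _ K]
        rw [intervalIntegral.integral_const_mul, integral_rpow_mul_one_sub_pow a hc,
          sub_add_cancel]
    _ ≤ K * (a ! / y ^ (a + 1)) := by
        gcongr
        calc y ^ (a + 1) = ∏ _t ∈ range (a + 1), y := by rw [prod_const, card_range]
          _ ≤ _ := prod_le_prod (fun _ _ => hy.le) fun t _ => by simp
    _ = _ := by rw [tmBlockConst_eq, mul_div_assoc]

lemma div_le_tmSum_two_pow {y : ℝ} (hy : 0 < y) (a : ℕ) :
    tmBlockConst a / (y + 2 ^ a) ^ (a + 1) ≤ tmSum y (2 ^ a) := by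
  set K := ∏ i ∈ range a, (2 : ℝ) ^ i
  set d := 2 ^ a - 1 - a
  have hc : -1 < y - 1 := by linarith
  have hda : d + a < 2 ^ a := by have := a.lt_two_pow_self; omega
  rw [tmSum_two_pow_eq_integral hy]
  calc _ = K * (a ! / (y + 2 ^ a) ^ (a + 1)) := by rw [tmBlockConst_eq, mul_div_assoc]
    _ ≤ K * (a ! / ∏ t ∈ range (a + 1), (y - 1 + d + 1 + t)) := by
        have hfactor : ∀ t : ℕ, 0 < y - 1 + d + 1 + t := fun t => by
          linarith [d.cast_nonneg (α := ℝ), t.cast_nonneg (α := ℝ)]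
        gcongr
        · exact prod_pos fun t _ => hfactor t
        calc _ ≤ ∏ _t ∈ range (a + 1), (y + 2 ^ a) :=
              prod_le_prod (fun t _ => (hfactor t).le) fun t ht => ?_
          _ = _ := by rw [prod_const, card_range]
        have : ((d + t : ℕ) : ℝ) ≤ 2 ^ a := by
          exact_mod_cast (show d + t ≤ 2 ^ a by simp at ht; omega)
        push_cast at this
        linarith
    _ = ∫ u in (0 : ℝ)..1, u ^ (y - 1) * (K * (u ^ d * (1 - u) ^ a)) := by
        simp_rw [mul_left_comm _ K]
        rw [intervalIntegral.integral_const_mul, integral_rpow_mul_pow_mul_one_sub_pow hc]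
    _ ≤ _ :=
        intervalIntegral.integral_mono_on zero_le_one
          (intervalIntegrable_rpow_mul hc (by fun_prop) _ _)
          (intervalIntegrable_rpow_mul hc (by fun_prop) _ _) fun u hu =>
          mul_le_mul_of_nonneg_left (le_prod_one_sub_pow_two_pow hu.1 hu.2 a)
            (Real.rpow_nonneg hu.1 _)

lemma abs_tmSum_two_pow_le {y : ℝ} (hy : 0 < y) (a : ℕ) :
    |tmSum y (2 ^ a)| ≤ tmBlockConst a / y ^ (a + 1) := by
  have hpos := (div_pos (tmBlockConst_pos a) (by positivity)).trans_le (div_le_tmSum_two_pow hy a)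
  rw [abs_of_pos hpos]
  exact tmSum_two_pow_le hy a

lemma abs_tmSum_two_pow_mul_le {y : ℝ} (hy : 0 < y) (j n q : ℕ) (hq : q < 2 ^ n) :
    |tmSum y (2 ^ j * q)| ≤ ∑ i ∈ Ico j (j + n), tmBlockConst i / y ^ (i + 1) := by
  induction n generalizing j q with
  | zero => simp [show q = 0 by simpa using hq, tmSum]
  | succ n ih =>
    set y' := y + ((2 ^ (j + 1) * (q / 2) : ℕ) : ℝ)
    have hy' : y ≤ y' := by simp [y']
    have hlow : |tmSum y' (2 ^ j * (q % 2))| ≤ tmBlockConst j / y ^ (j + 1) := by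
      rcases Nat.mod_two_eq_zero_or_one q with h | h
      · simpa [h, tmSum] using (div_pos (tmBlockConst_pos j) (by positivity)).le
      · rw [h, mul_one]
        refine (abs_tmSum_two_pow_le (hy.trans_le hy') j).trans ?_
        gcongr
        exact (tmBlockConst_pos j).le
    have hdecomp : 2 ^ j * q = 2 ^ (j + 1) * (q / 2) + 2 ^ j * (q % 2) := by
      rw [pow_succ, mul_assoc, ← mul_add, Nat.div_add_mod]
    have hmod : 2 ^ j * (q % 2) ≤ 2 ^ (j + 1) := by
      rw [pow_succ]
      exact Nat.mul_le_mul_left _ (q.mod_lt two_pos).le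
    have hhigh := ih (j + 1) (q / 2) (by rw [pow_succ] at hq; omega)
    rw [hdecomp, tmSum_two_pow_mul_add y (j + 1) _ _ hmod, sum_eq_sum_Ico_succ_bot (by omega),
      show j + (n + 1) = j + 1 + n by ring]
    calc _ ≤ |tmSum y (2 ^ (j + 1) * (q / 2))| + |tmSign (q / 2) * tmSum y' (2 ^ j * (q % 2))| :=
          abs_add_le _ _
      _ ≤ _ := by
        rw [abs_mul, abs_tmSign, one_mul]
        linarith

lemma four_mul_tmBlockConst_succ_div_le {x : ℝ} (hx : 0 < x) {i : ℕ}
    (h : 2 ^ (i + 2) * ((i : ℝ) + 1) ≤ x) :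
    4 * (tmBlockConst (i + 1) / x ^ (i + 2)) ≤ tmBlockConst i / x ^ (i + 1) := by
  rw [tmBlockConst, prod_range_succ, ← tmBlockConst]
  have hC := (tmBlockConst_pos i).le
  calc _ = tmBlockConst i / x ^ (i + 1) * (2 ^ (i + 2) * (i + 1) / x) := by ring
    _ ≤ tmBlockConst i / x ^ (i + 1) * 1 := by gcongr; exact div_le_one_of_le₀ h hx.le
    _ = _ := mul_one _

lemma sum_Ico_le_div_three_of_four_mul_le {B : ℕ → ℝ} (hB : ∀ i, 0 ≤ B i) (c n : ℕ)
    (h : ∀ i ∈ Ico c (c + n), 4 * B (i + 1) ≤ B i) :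
    ∑ i ∈ Ico (c + 1) (c + 1 + n), B i ≤ B c / 3 := by
  induction n generalizing c with
  | zero => simpa using div_nonneg (hB c) zero_le_three
  | succ n ih =>
    have hrest := ih (c + 1) fun i hi => h i (by simp at hi ⊢; omega)
    have hc := h c (by simp)
    rw [sum_eq_sum_Ico_succ_bot (by omega), show c + 1 + (n + 1) = c + 1 + 1 + n by ring]
    linarith

lemma add_pow_le_two_mul_pow {x y : ℝ} (hx : 0 < x) (hy : 0 ≤ y) {n : ℕ} (h : 2 * n * y ≤ x) :
    (x + y) ^ n ≤ 2 * x ^ n := by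
  have hxy : 0 < x + y := by linarith
  have hratio : y / (x + y) ≤ 1 := (div_le_one hxy).2 (by linarith)
  have hbern := one_add_mul_le_pow (a := -(y / (x + y))) (by linarith) n
  have hhalf : n * (y / (x + y)) ≤ 1 / 2 := by
    rw [mul_div_assoc', div_le_iff₀ hxy]; linarith
  have hbase : 1 + -(y / (x + y)) = x / (x + y) := by field_simp; ring
  rw [hbase, div_pow, le_div_iff₀ (by positivity)] at hbern
  nlinarith [pow_pos hxy n]

lemma abs_tmSum_two_pow_mul_le_div_three {k c t : ℕ} {x : ℝ}
    (hx : 2 ^ (k + 1) * ((k : ℝ) + 1) ≤ x) (ht : t < 2 ^ (k - (c + 1))) :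
    |tmSum x (2 ^ (c + 1) * t)| ≤ tmBlockConst c / x ^ (c + 1) / 3 := by
  have hx0 : 0 < x := hx.trans_lt' (by positivity)
  refine (abs_tmSum_two_pow_mul_le hx0 (c + 1) _ t ht).trans ?_
  refine sum_Ico_le_div_three_of_four_mul_le (fun i => (div_pos (tmBlockConst_pos i)
    (by positivity)).le) c _ fun i hi => four_mul_tmBlockConst_succ_div_le hx0 (hx.trans' ?_)
  have hik : i + 2 ≤ k + 1 := by simp at hi; omega
  have hik' : (i : ℝ) + 1 ≤ k + 1 := by exact_mod_cast (by omega : i + 1 ≤ k + 1)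
  gcongr
  exact one_le_two

lemma tmBlockConst_div_two_le_tmSum_two_pow {k c : ℕ} {x y : ℝ}
    (hx : 2 ^ (k + 1) * ((k : ℝ) + 1) ≤ x) (hck : c ≤ k) (hxy : x ≤ y)
    (hyk : y + 2 ^ c ≤ x + 2 ^ k) :
    tmBlockConst c / x ^ (c + 1) / 2 ≤ tmSum y (2 ^ c) := by
  have hx0 : 0 < x := hx.trans_lt' (by positivity)
  have hpow : (x + 2 ^ k) ^ (c + 1) ≤ 2 * x ^ (c + 1) := by
    refine add_pow_le_two_mul_pow hx0 (by positivity) (hx.trans' ?_)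
    have : ((c + 1 : ℕ) : ℝ) ≤ k + 1 := by exact_mod_cast (by omega : c + 1 ≤ k + 1)
    rw [pow_succ]
    nlinarith [(by positivity : (0 : ℝ) < 2 ^ k)]
  have hy0 : 0 < y := hx0.trans_le hxy
  refine le_trans ?_ (div_le_tmSum_two_pow hy0 c)
  have := tmBlockConst_pos c
  rw [div_div, mul_comm]
  gcongr
  exact hpow.trans' (pow_le_pow_left₀ (by positivity) hyk _)

lemma Real.sign_eq_of_pos_mul {s z : ℝ} (hs : |s| = 1) (h : 0 < s * z) : Real.sign z = s := by
  rcases (abs_eq zero_le_one).1 hs with rfl | rfl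
  · exact Real.sign_of_pos (by linarith)
  · exact Real.sign_of_neg (by linarith)

lemma neg_tmSign_mul_tmSum_pos {k r : ℕ} (hr0 : 0 < r) (hrk : r < 2 ^ k) {x : ℝ}
    (hx : 2 ^ (k + 1) * ((k : ℝ) + 1) ≤ x) : 0 < -tmSign r * tmSum x r := by
  obtain ⟨c, _, ⟨t, rfl⟩, rfl⟩ := Nat.exists_eq_two_pow_mul_odd hr0.ne'
  have hr : 2 ^ c * (2 * t + 1) = 2 ^ (c + 1) * t + 2 ^ c := by ring
  have hck : c + 1 ≤ k := (Nat.pow_lt_pow_iff_right one_lt_two).1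
    ((Nat.le_mul_of_pos_right _ (by omega)).trans_lt hrk)
  have ht : t < 2 ^ (k - (c + 1)) := by
    refine Nat.lt_of_mul_lt_mul_left (a := 2 ^ (c + 1)) ?_
    rw [← pow_add, Nat.add_sub_cancel' hck]
    exact (Nat.le_add_right _ _).trans_lt (hr ▸ hrk)
  have hsplit : -tmSign (2 ^ c * (2 * t + 1)) * tmSum x (2 ^ c * (2 * t + 1)) =
      tmSign t * tmSum x (2 ^ (c + 1) * t) + tmSum (x + (2 ^ (c + 1) * t : ℕ)) (2 ^ c) := by
    rw [hr, tmSum_two_pow_mul_add x (c + 1) t _ (Nat.pow_le_pow_right two_pos (by omega)),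
      tmSign_two_pow_mul_add _ _ _ (Nat.pow_lt_pow_right one_lt_two (by omega)), tmSign_two_pow]
    linear_combination tmSum (x + (2 ^ (c + 1) * t : ℕ)) (2 ^ c) * tmSign_mul_self t
  have hyk : x + (2 ^ (c + 1) * t : ℕ) + 2 ^ c ≤ x + 2 ^ k := by
    have : ((2 ^ (c + 1) * t + 2 ^ c : ℕ) : ℝ) ≤ 2 ^ k := by exact_mod_cast (hr ▸ hrk).le
    push_cast at this ⊢
    linarith
  have hhead := tmBlockConst_div_two_le_tmSum_two_pow (c := c) hx (by omega) (by simp) hyk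
  have htail : |tmSign t * tmSum x (2 ^ (c + 1) * t)| ≤ tmBlockConst c / x ^ (c + 1) / 3 := by
    rw [abs_mul, abs_tmSign, one_mul]
    exact abs_tmSum_two_pow_mul_le_div_three hx ht
  have hB : 0 < tmBlockConst c / x ^ (c + 1) :=
    div_pos (tmBlockConst_pos c) (pow_pos (hx.trans_lt' (by positivity)) _)
  rw [hsplit]
  linarith [neg_abs_le (tmSign t * tmSum x (2 ^ (c + 1) * t))]

theorem stmt_9_general (k : ℕ) (r : ℕ) (hr0 : 0 < r) (hrk : r < 2 ^ k)
    (x : ℝ) (hx : 2 ^ (k + 1) * ((k : ℝ) + 1) ≤ x) :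
    Real.sign (∑ ℓ ∈ Finset.range r, tmSign ℓ / (x + ℓ)) = - tmSign r :=
  Real.sign_eq_of_pos_mul (by rw [abs_neg, abs_tmSign]) (neg_tmSign_mul_tmSum_pos hr0 hrk hx)

/-- for `k ≥ 1`, `0 < r < 2^k`, and `x ≥ 2^{k+1}(k+1)`, the sign of
`∑_{0 ≤ ℓ < r} ε_ℓ/(x+ℓ)` equals `-ε_r`. -/
theorem stmt_9 (k : ℕ) (hk : 1 ≤ k) (r : ℕ) (hr0 : 0 < r) (hrk : r < 2 ^ k)
    (x : ℝ) (hx : 2 ^ (k + 1) * ((k : ℝ) + 1) ≤ x) :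
    Real.sign (∑ ℓ ∈ Finset.range r, tmSign ℓ / (x + ℓ)) = - tmSign r :=
  stmt_9_general k r hr0 hrk x hx
end

section
/- Let τ ∈ ℝ, let k ≥ 0 be an integer, and let n ≥ 2^{k+1}·(k+1) be an integer such that σ_{n−1}(τ) ≤ τ < σ_{n−1}(τ) + g_k(n). Then s_{n+r}(τ) = ε_r for all integers r with 0 ≤ r < 2^{k+1}, and at least one of the following holds: (i) σ_{n−1}(τ) ≤ τ < σ_{n−1}(τ) + g_{k+1}(n); (ii) σ_{n−1+2^k}(τ) − g_k(n+2^k) ≤ τ < σ_{n−1+2^k}(τ). Symmetrically, if instead σ_{n−1}(τ) − g_k(n) ≤ τ < σ_{n−1}(τ), then s_{n+r}(τ) = −ε_r for all 0 ≤ r < 2^{k+1}, and at least one of the following holds: (i') σ_{n−1}(τ) − g_{k+1}(n) ≤ τ < σ_{n−1}(τ); (ii') σ_{n−1+2^k}(τ) ≤ τ < σ_{n−1+2^k}(τ) + g_k(n+2^k). -/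
/-- Greedy partial sums: `gSigma τ n = σ_n(τ)`. -/
noncomputable def gSigma (τ : ℝ) : ℕ → ℝ
  | 0 => 0
  | n + 1 => gSigma τ n + (if gSigma τ n ≤ τ then (1 : ℝ) else -1) / (n + 1)

/-- Greedy signs: for `n ≥ 1`, `gSign τ n = s_n(τ)`. -/
noncomputable def gSign (τ : ℝ) (n : ℕ) : ℝ :=
  if gSigma τ (n - 1) ≤ τ then 1 else -1

/-!
Induction on `k`. If `τ` lies in the window `[σ_{n-1}, σ_{n-1} + g_{k+1}(n))`, which is contained
in the window of width `g_k(n)`, the induction hypothesis makes the first `2^{k+1}` signs equal to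
`ε_r`, and this moves the partial sum up by exactly `g_{k+1}(n)`. Provided
`g_{k+1}(n) ≤ g_k(n + 2^{k+1})`, `τ` then lies in the window of width `g_k` just below the new
partial sum, so the next `2^{k+1}` signs are `-ε_r = ε_{2^{k+1}+r}`.

That inequality, i.e. `g_k(N) ≤ g_k(N + 2^k) + g_k(N + 2^{k+1})` for `N ≥ 2^{k+2}(k+1)`, comes from
`g_k(N) = ∫₀¹ t^{N-1} P_k(t) dt` with `P_k(t) = ∏_{j<k} (1 - t^{2^j})`. As `P_k` vanishes to order
`k` at `t = 1`, integration by parts gives `N g_k(N) ≤ (N + k + 1) g_k(N + 1)`, so over `m` steps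
`g_k` decays at most by the factor `(N / (N + k + 1))^m ≥ 1 - m (k + 1) / (N + k + 1)`.

The alternatives (i) and (ii) just split the window of width `g_k(n)` at
`σ_{n-1} + g_{k+1}(n) = σ_{n-1+2^k} - g_k(n + 2^k)`.
-/

open Finset intervalIntegral

lemma tmSign_zero : tmSign 0 = 1 := by simp [tmSign]

lemma tmSign_two_mul (m : ℕ) : tmSign (2 * m) = tmSign m := by
  rcases Nat.eq_zero_or_pos m with rfl | hm
  · rfl
  · rw [tmSign, Nat.digits_def' (by norm_num) (by omega)]
    simp [tmSign]

lemma tmSign_two_mul_add_one (m : ℕ) : tmSign (2 * m + 1) = -tmSign m := by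
  rw [tmSign, Nat.digits_def' (by norm_num) (by omega)]
  simp [tmSign, Nat.mul_add_div, pow_add]

lemma tmSign_two_pow_add {k ℓ : ℕ} (hℓ : ℓ < 2 ^ k) : tmSign (2 ^ k + ℓ) = -tmSign ℓ := by
  induction k generalizing ℓ with
  | zero =>
    obtain rfl : ℓ = 0 := by simpa using hℓ
    simpa [tmSign_zero] using tmSign_two_mul_add_one 0
  | succ k ih =>
    obtain ⟨q, rfl | rfl⟩ := Nat.even_or_odd' ℓ
    · rw [show 2 ^ (k + 1) + 2 * q = 2 * (2 ^ k + q) by ring, tmSign_two_mul, tmSign_two_mul,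
        ih (by omega)]
    · rw [show 2 ^ (k + 1) + (2 * q + 1) = 2 * (2 ^ k + q) + 1 by ring, tmSign_two_mul_add_one,
        tmSign_two_mul_add_one, ih (by omega)]

lemma eq_tmSign_of_halves {f : ℕ → ℝ} {k : ℕ} (h₁ : ∀ r < 2 ^ k, f r = tmSign r)
    (h₂ : ∀ r < 2 ^ k, f (2 ^ k + r) = -tmSign r) : ∀ r < 2 ^ (k + 1), f r = tmSign r := by
  intro r hr
  by_cases hlt : r < 2 ^ k
  · exact h₁ r hlt
  · obtain ⟨s, rfl⟩ := Nat.exists_eq_add_of_le (not_lt.mp hlt)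
    rw [h₂ s (by rw [pow_succ] at hr; omega), tmSign_two_pow_add (by rw [pow_succ] at hr; omega)]

lemma eq_neg_tmSign_of_halves {f : ℕ → ℝ} {k : ℕ} (h₁ : ∀ r < 2 ^ k, f r = -tmSign r)
    (h₂ : ∀ r < 2 ^ k, f (2 ^ k + r) = tmSign r) : ∀ r < 2 ^ (k + 1), f r = -tmSign r := by
  intro r hr
  rw [← neg_eq_iff_eq_neg]
  exact eq_tmSign_of_halves (f := fun r => -f r) (fun r hr => by rw [h₁ r hr, neg_neg])
    (fun r hr => by rw [h₂ r hr]) r hr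

lemma gFun_succ (k : ℕ) (x : ℝ) : gFun (k + 1) x = gFun k x - gFun k (x + 2 ^ k) := by
  rw [gFun, pow_succ, mul_two, sum_range_add, gFun, gFun, sub_eq_add_neg, ← sum_neg_distrib]
  congr 1
  refine sum_congr rfl fun ℓ hℓ => ?_
  rw [tmSign_two_pow_add (mem_range.mp hℓ)]
  push_cast
  ring

noncomputable def tmProd (k : ℕ) (t : ℝ) : ℝ := ∏ j ∈ range k, (1 - t ^ 2 ^ j)

lemma tmProd_succ (k : ℕ) (t : ℝ) : tmProd (k + 1) t = tmProd k t * (1 - t ^ 2 ^ k) :=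
  prod_range_succ _ _

lemma tmProd_eq_sum (k : ℕ) (t : ℝ) : tmProd k t = ∑ ℓ ∈ range (2 ^ k), tmSign ℓ * t ^ ℓ := by
  induction k with
  | zero => simp [tmProd, tmSign_zero]
  | succ k ih =>
    rw [tmProd_succ, ih, pow_succ, mul_two, sum_range_add, mul_sub, mul_one, sum_mul,
      sub_eq_add_neg, ← sum_neg_distrib]
    congr 1
    refine sum_congr rfl fun ℓ hℓ => ?_
    rw [tmSign_two_pow_add (mem_range.mp hℓ), pow_add]
    ring

lemma tmProd_nonneg (k : ℕ) {t : ℝ} (ht₀ : 0 ≤ t) (ht₁ : t ≤ 1) : 0 ≤ tmProd k t :=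
  prod_nonneg fun _ _ => sub_nonneg.mpr (pow_le_one₀ ht₀ ht₁)

lemma tmProd_pos (k : ℕ) {t : ℝ} (ht₀ : 0 ≤ t) (ht₁ : t < 1) : 0 < tmProd k t :=
  prod_pos fun _ _ => sub_pos.mpr (pow_lt_one₀ ht₀ ht₁ (by positivity))

lemma contDiff_tmProd (k : ℕ) : ContDiff ℝ 1 (tmProd k) := by
  unfold tmProd
  fun_prop

@[fun_prop]
lemma continuous_tmProd (k : ℕ) : Continuous (tmProd k) :=
  (contDiff_tmProd k).continuous

lemma differentiable_tmProd (k : ℕ) : Differentiable ℝ (tmProd k) :=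
  (contDiff_tmProd k).differentiable one_ne_zero

@[fun_prop]
lemma continuous_deriv_tmProd (k : ℕ) : Continuous (deriv (tmProd k)) :=
  (contDiff_tmProd k).continuous_deriv le_rfl

lemma one_sub_mul_mul_pow_le {t : ℝ} (ht₀ : 0 ≤ t) (ht₁ : t ≤ 1) (m : ℕ) :
    (1 - t) * ((m + 1) * t ^ m) ≤ 1 - t ^ (m + 1) := by
  have hgeom : 1 - t ^ (m + 1) = (1 - t) * ∑ i ∈ range (m + 1), t ^ i := by
    linear_combination geom_sum_mul t (m + 1)
  rw [hgeom]
  refine mul_le_mul_of_nonneg_left ?_ (sub_nonneg.mpr ht₁)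
  calc ((m : ℝ) + 1) * t ^ m = ∑ _i ∈ range (m + 1), t ^ m := by simp
    _ ≤ ∑ i ∈ range (m + 1), t ^ i :=
      sum_le_sum fun i hi => pow_le_pow_of_le_one ht₀ ht₁ (Nat.lt_succ_iff.mp (mem_range.mp hi))

lemma one_sub_mul_deriv_tmProd_add_nonneg (k : ℕ) {t : ℝ} (ht₀ : 0 ≤ t) (ht₁ : t ≤ 1) :
    0 ≤ (1 - t) * deriv (tmProd k) t + k * tmProd k t := by
  induction k with
  | zero =>
    have : tmProd 0 = fun _ => 1 := funext fun _ => prod_range_zero _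
    simp [this]
  | succ k ih =>
    obtain ⟨m, hm⟩ := Nat.exists_eq_add_of_le' (Nat.one_le_two_pow (n := k))
    have hfun : tmProd (k + 1) = fun x => tmProd k x * (1 - x ^ 2 ^ k) := funext (tmProd_succ k)
    have hderiv : deriv (tmProd (k + 1)) t
        = deriv (tmProd k) t * (1 - t ^ 2 ^ k) - tmProd k t * (2 ^ k * t ^ (2 ^ k - 1)) := by
      rw [hfun]
      exact (((differentiable_tmProd k t).hasDerivAt).mul
        ((hasDerivAt_pow _ t).const_sub 1)).deriv.trans (by push_cast; ring)
    have hP := tmProd_nonneg k ht₀ ht₁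
    have hpow : 0 ≤ 1 - t ^ (m + 1) := sub_nonneg.mpr (pow_le_one₀ ht₀ ht₁)
    have hscalar := one_sub_mul_mul_pow_le ht₀ ht₁ m
    have hmR : (2 : ℝ) ^ k = m + 1 := by exact_mod_cast hm
    rw [hderiv, tmProd_succ, hmR, hm, Nat.add_sub_cancel]
    push_cast
    nlinarith [mul_nonneg hpow ih, mul_nonneg hP (sub_nonneg.mpr hscalar)]

lemma gFun_natCast_eq_integral (k : ℕ) {N : ℕ} (hN : 1 ≤ N) :
    gFun k N = ∫ t in (0 : ℝ)..1, t ^ (N - 1) * tmProd k t := by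
  simp_rw [tmProd_eq_sum, mul_sum]
  rw [integral_finsetSum fun ℓ _ => by apply Continuous.intervalIntegrable; fun_prop, gFun]
  refine sum_congr rfl fun ℓ _ => ?_
  have hexp : ((N - 1 + ℓ : ℕ) : ℝ) + 1 = N + ℓ := by push_cast [Nat.cast_sub hN]; ring
  simp_rw [mul_left_comm _ (tmSign ℓ), ← pow_add]
  rw [integral_const_mul, integral_pow, hexp]
  simp [div_eq_mul_inv]

lemma gFun_natCast_pos (k : ℕ) {N : ℕ} (hN : 1 ≤ N) : 0 < gFun k N := by
  rw [gFun_natCast_eq_integral k hN]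
  refine intervalIntegral_pos_of_pos_on (by apply Continuous.intervalIntegrable; fun_prop)
    (fun t ht => mul_pos (pow_pos ht.1 _) (tmProd_pos k ht.1.le ht.2)) one_pos

lemma integral_pow_mul_tmProd_le (k M : ℕ) :
    (M + 1) * ∫ t in (0 : ℝ)..1, t ^ M * tmProd k t
      ≤ (M + k + 2) * ∫ t in (0 : ℝ)..1, t ^ (M + 1) * tmProd k t := by
  set F' : ℝ → ℝ := fun t => (M + 1) * t ^ M * ((1 - t) * tmProd k t)
    + t ^ (M + 1) * (-tmProd k t + (1 - t) * deriv (tmProd k) t)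
  have hF' : ∀ t ∈ Set.uIcc (0 : ℝ) 1,
      HasDerivAt (fun t => t ^ (M + 1) * ((1 - t) * tmProd k t)) (F' t) t := fun t _ => by
    refine ((hasDerivAt_pow (M + 1) t).fun_mul (((hasDerivAt_id t).const_sub 1).fun_mul
      (differentiable_tmProd k t).hasDerivAt)).congr_deriv ?_
    simp only [F', id, Nat.add_sub_cancel]
    push_cast
    ring
  have hint : ∫ t in (0 : ℝ)..1, F' t = 0 := by
    rw [integral_eq_sub_of_hasDerivAt hF' (by apply Continuous.intervalIntegrable; fun_prop)]
    simp
  have hpointwise : ∀ t ∈ Set.Icc (0 : ℝ) 1, (M + 1) * (t ^ M * tmProd k t)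
      ≤ (M + k + 2) * (t ^ (M + 1) * tmProd k t) + F' t := fun t ht => by
    have := mul_nonneg (pow_nonneg ht.1 (M + 1))
      (one_sub_mul_deriv_tmProd_add_nonneg k ht.1 ht.2)
    simp only [F']
    linear_combination this
  calc (M + 1) * ∫ t in (0 : ℝ)..1, t ^ M * tmProd k t
      = ∫ t in (0 : ℝ)..1, (M + 1) * (t ^ M * tmProd k t) := (integral_const_mul _ _).symm
    _ ≤ ∫ t in (0 : ℝ)..1, ((M + k + 2) * (t ^ (M + 1) * tmProd k t) + F' t) :=
      integral_mono_on zero_le_one (by apply Continuous.intervalIntegrable; fun_prop)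
        (by apply Continuous.intervalIntegrable; fun_prop) hpointwise
    _ = (M + k + 2) * ∫ t in (0 : ℝ)..1, t ^ (M + 1) * tmProd k t := by
      rw [integral_add (by apply Continuous.intervalIntegrable; fun_prop)
        (by apply Continuous.intervalIntegrable; fun_prop), integral_const_mul, hint, add_zero]

lemma natCast_mul_gFun_le (k : ℕ) {N : ℕ} (hN : 1 ≤ N) :
    N * gFun k N ≤ (N + k + 1) * gFun k (N + 1) := by
  obtain ⟨M, rfl⟩ := Nat.exists_eq_add_of_le' hN
  have h₀ := gFun_natCast_eq_integral k (N := M + 1) le_add_self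
  have h₁ := gFun_natCast_eq_integral k (N := M + 1 + 1) le_add_self
  rw [Nat.add_sub_cancel] at h₀ h₁
  have h := integral_pow_mul_tmProd_le k M
  rw [← h₀, ← h₁] at h
  push_cast at h ⊢
  linarith

lemma div_pow_mul_gFun_le (k : ℕ) {N : ℕ} (hN : 1 ≤ N) (m : ℕ) :
    (N / (N + k + 1) : ℝ) ^ m * gFun k N ≤ gFun k (N + m) := by
  induction m with
  | zero => simp
  | succ m ih =>
    have hshift := natCast_mul_gFun_le k (N := N + m) (by omega)
    push_cast at hshift
    have hratio : (N / (N + k + 1) : ℝ) ≤ (N + m) / (N + m + k + 1) := by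
      rw [div_le_div_iff₀ (by positivity) (by positivity)]
      nlinarith [(Nat.cast_nonneg m : (0 : ℝ) ≤ m), (Nat.cast_nonneg k : (0 : ℝ) ≤ k)]
    calc (N / (N + k + 1) : ℝ) ^ (m + 1) * gFun k N
        = (N / (N + k + 1) : ℝ) * ((N / (N + k + 1) : ℝ) ^ m * gFun k N) := by ring
      _ ≤ (N + m) / (N + m + k + 1) * gFun k (N + m) :=
        mul_le_mul hratio ih (mul_nonneg (by positivity) (gFun_natCast_pos k hN).le)
          (by positivity)
      _ ≤ gFun k (N + (m + 1 : ℕ)) := by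
        rw [div_mul_eq_mul_div, div_le_iff₀ (by positivity), Nat.cast_succ, ← add_assoc]
        linarith

lemma gFun_succ_le_gFun_add_two_pow (k : ℕ) {N : ℕ} (hN : 2 ^ (k + 2) * (k + 1) ≤ N) :
    gFun (k + 1) N ≤ gFun k (N + 2 ^ (k + 1)) := by
  have hN₁ : 1 ≤ N := le_trans (Nat.one_le_iff_ne_zero.mpr (by positivity)) hN
  have hNR : (2 : ℝ) ^ k * (k + 1) * 4 ≤ N := by
    rw [show (2 : ℝ) ^ k * (k + 1) * 4 = 2 ^ (k + 2) * (k + 1) by ring]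
    exact_mod_cast hN
  have hsmall : (2 : ℝ) ^ k * ((k + 1) / (N + k + 1)) ≤ 1 / 4 := by
    rw [← mul_div_assoc, div_le_div_iff₀ (by positivity) (by norm_num)]
    linarith
  have hc : 3 / 4 ≤ (N / (N + k + 1) : ℝ) ^ 2 ^ k := by
    have hbern := one_add_mul_le_pow (a := -((k + 1) / (N + k + 1) : ℝ))
      (by rw [neg_le_neg_iff, div_le_iff₀ (by positivity)]; linarith) (2 ^ k)
    rw [show 1 + -((k + 1) / (N + k + 1) : ℝ) = N / (N + k + 1) by field_simp; ring] at hbern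
    push_cast at hbern
    linarith
  have h₁ := div_pow_mul_gFun_le k hN₁ (2 ^ k)
  have h₂ := div_pow_mul_gFun_le k hN₁ (2 ^ (k + 1))
  rw [pow_succ 2 k, pow_mul] at h₂
  have hpos := gFun_natCast_pos k hN₁
  push_cast at h₁ h₂
  rw [gFun_succ, pow_succ]
  nlinarith [mul_le_mul_of_nonneg_right hc hpos.le]

lemma gSign_of_le {τ : ℝ} {n : ℕ} (h : gSigma τ (n - 1) ≤ τ) : gSign τ n = 1 := if_pos h

lemma gSign_of_lt {τ : ℝ} {n : ℕ} (h : τ < gSigma τ (n - 1)) : gSign τ n = -1 :=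
  if_neg (not_le.mpr h)

lemma gSigma_succ (τ : ℝ) (m : ℕ) :
    gSigma τ (m + 1) = gSigma τ m + gSign τ (m + 1) / (m + 1) := by
  simp [gSigma, gSign]

lemma gSigma_sub_one_add {τ : ℝ} {n j : ℕ} (hn : 1 ≤ n) {a : ℕ → ℝ}
    (h : ∀ r < j, gSign τ (n + r) = a r) :
    gSigma τ (n - 1 + j) = gSigma τ (n - 1) + ∑ r ∈ range j, a r / (n + r) := by
  induction j with
  | zero => simp
  | succ j ih =>
    rw [← add_assoc, gSigma_succ, ih fun r hr => h r (by omega), sum_range_succ,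
      show n - 1 + j + 1 = n + j by omega, h j (by omega), add_assoc]
    push_cast [Nat.cast_sub hn]
    ring

lemma gSigma_sub_one_add_of_tmSign {τ : ℝ} {n k : ℕ} (hn : 1 ≤ n)
    (h : ∀ r < 2 ^ k, gSign τ (n + r) = tmSign r) :
    gSigma τ (n - 1 + 2 ^ k) = gSigma τ (n - 1) + gFun k n :=
  gSigma_sub_one_add hn h

lemma gSigma_sub_one_add_of_neg_tmSign {τ : ℝ} {n k : ℕ} (hn : 1 ≤ n)
    (h : ∀ r < 2 ^ k, gSign τ (n + r) = -tmSign r) :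
    gSigma τ (n - 1 + 2 ^ k) = gSigma τ (n - 1) - gFun k n := by
  rw [gSigma_sub_one_add hn h, gFun, sub_eq_add_neg, ← sum_neg_distrib]
  simp only [neg_div]

lemma gSign_eq_tmSign_of_window_zero (τ : ℝ) {n : ℕ} (hn : 1 ≤ n) :
    (gSigma τ (n - 1) ≤ τ ∧ τ < gSigma τ (n - 1) + gFun 0 n →
      ∀ r < 2, gSign τ (n + r) = tmSign r) ∧
    (gSigma τ (n - 1) - gFun 0 n ≤ τ ∧ τ < gSigma τ (n - 1) →
      ∀ r < 2, gSign τ (n + r) = -tmSign r) := by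
  have hidx : n + (2 ^ 0 + 0) - 1 = n - 1 + 2 ^ 0 := by omega
  constructor
  · rintro ⟨h₁, h₂⟩
    have hs₁ : ∀ r < 2 ^ 0, gSign τ (n + r) = tmSign r := fun r hr => by
      obtain rfl : r = 0 := by simpa using hr
      rw [tmSign_zero, add_zero, gSign_of_le h₁]
    refine eq_tmSign_of_halves hs₁ fun r hr => ?_
    obtain rfl : r = 0 := by simpa using hr
    rw [tmSign_zero, gSign_of_lt]
    rwa [hidx, gSigma_sub_one_add_of_tmSign hn hs₁]
  · rintro ⟨h₁, h₂⟩
    have hs₁ : ∀ r < 2 ^ 0, gSign τ (n + r) = -tmSign r := fun r hr => by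
      obtain rfl : r = 0 := by simpa using hr
      rw [tmSign_zero, add_zero, gSign_of_lt h₂]
    refine eq_neg_tmSign_of_halves hs₁ fun r hr => ?_
    obtain rfl : r = 0 := by simpa using hr
    rw [tmSign_zero, gSign_of_le]
    rwa [hidx, gSigma_sub_one_add_of_neg_tmSign hn hs₁]

theorem gSign_eq_tmSign_of_window (τ : ℝ) (k : ℕ) {n : ℕ} (hn : 2 ^ (k + 1) * (k + 1) ≤ n) :
    (gSigma τ (n - 1) ≤ τ ∧ τ < gSigma τ (n - 1) + gFun k n →
      ∀ r < 2 ^ (k + 1), gSign τ (n + r) = tmSign r) ∧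
    (gSigma τ (n - 1) - gFun k n ≤ τ ∧ τ < gSigma τ (n - 1) →
      ∀ r < 2 ^ (k + 1), gSign τ (n + r) = -tmSign r) := by
  induction k generalizing n with
  | zero => exact gSign_eq_tmSign_of_window_zero τ (by omega)
  | succ k ih =>
    have hn₁ : 1 ≤ n := le_trans (Nat.one_le_iff_ne_zero.mpr (by positivity)) hn
    have hn' : 2 ^ (k + 1) * (k + 1) ≤ n :=
      le_trans (Nat.mul_le_mul (Nat.pow_le_pow_right two_pos (by omega)) (by omega)) hn
    have hidx : n + 2 ^ (k + 1) - 1 = n - 1 + 2 ^ (k + 1) := Nat.sub_add_comm hn₁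
    have hnarrow : gFun (k + 1) n ≤ gFun k n := by
      have := gFun_natCast_pos k (N := n + 2 ^ k) (by omega)
      push_cast at this
      rw [gFun_succ]
      linarith
    have hstep := gFun_succ_le_gFun_add_two_pow k (N := n)
      (le_trans (Nat.mul_le_mul_left _ (by omega)) hn)
    have ih' := @ih (n + 2 ^ (k + 1)) (le_trans hn' (Nat.le_add_right _ _))
    rw [hidx] at ih'
    push_cast at ih'
    constructor
    · rintro ⟨h₁, h₂⟩
      have hs₁ := (ih hn').1 ⟨h₁, h₂.trans_le (by linarith)⟩
      have hσ := gSigma_sub_one_add_of_tmSign hn₁ hs₁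
      have hs₂ := ih'.2 ⟨by linarith, by linarith⟩
      exact eq_tmSign_of_halves hs₁ fun r hr => by rw [← add_assoc]; exact hs₂ r hr
    · rintro ⟨h₁, h₂⟩
      have hs₁ := (ih hn').2 ⟨le_trans (by linarith) h₁, h₂⟩
      have hσ := gSigma_sub_one_add_of_neg_tmSign hn₁ hs₁
      have hs₂ := ih'.1 ⟨by linarith, by linarith⟩
      exact eq_neg_tmSign_of_halves hs₁ fun r hr => by rw [← add_assoc]; exact hs₂ r hr

lemma window_dichotomy_of_tmSign {τ : ℝ} {n k : ℕ} (hn : 1 ≤ n)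
    (hs : ∀ r < 2 ^ k, gSign τ (n + r) = tmSign r)
    (h : gSigma τ (n - 1) ≤ τ ∧ τ < gSigma τ (n - 1) + gFun k n) :
    (gSigma τ (n - 1) ≤ τ ∧ τ < gSigma τ (n - 1) + gFun (k + 1) n) ∨
      (gSigma τ (n - 1 + 2 ^ k) - gFun k (n + 2 ^ k) ≤ τ ∧ τ < gSigma τ (n - 1 + 2 ^ k)) := by
  rw [gSigma_sub_one_add_of_tmSign hn hs, gFun_succ]
  by_cases hlt : τ < gSigma τ (n - 1) + (gFun k n - gFun k (n + 2 ^ k))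
  · exact Or.inl ⟨h.1, hlt⟩
  · exact Or.inr ⟨by linarith, by linarith⟩

lemma window_dichotomy_of_neg_tmSign {τ : ℝ} {n k : ℕ} (hn : 1 ≤ n)
    (hs : ∀ r < 2 ^ k, gSign τ (n + r) = -tmSign r)
    (h : gSigma τ (n - 1) - gFun k n ≤ τ ∧ τ < gSigma τ (n - 1)) :
    (gSigma τ (n - 1) - gFun (k + 1) n ≤ τ ∧ τ < gSigma τ (n - 1)) ∨
      (gSigma τ (n - 1 + 2 ^ k) ≤ τ ∧ τ < gSigma τ (n - 1 + 2 ^ k) + gFun k (n + 2 ^ k)) := by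
  rw [gSigma_sub_one_add_of_neg_tmSign hn hs, gFun_succ]
  by_cases hle : gSigma τ (n - 1) - (gFun k n - gFun k (n + 2 ^ k)) ≤ τ
  · exact Or.inl ⟨hle, h.2⟩
  · exact Or.inr ⟨by linarith, by linarith⟩

/-- Lemma 13 of the paper: the key block-propagation dichotomy for the
greedy algorithm, for `n ≥ 2^{k+1}(k+1)`. -/
theorem stmt_10 (τ : ℝ) (k n : ℕ) (hn : 2 ^ (k + 1) * (k + 1) ≤ n) :
    (gSigma τ (n - 1) ≤ τ ∧ τ < gSigma τ (n - 1) + gFun k (n : ℝ) →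
      (∀ r : ℕ, r < 2 ^ (k + 1) → gSign τ (n + r) = tmSign r) ∧
      ((gSigma τ (n - 1) ≤ τ ∧ τ < gSigma τ (n - 1) + gFun (k + 1) (n : ℝ)) ∨
        (gSigma τ (n - 1 + 2 ^ k) - gFun k ((n : ℝ) + 2 ^ k) ≤ τ ∧
          τ < gSigma τ (n - 1 + 2 ^ k)))) ∧
    (gSigma τ (n - 1) - gFun k (n : ℝ) ≤ τ ∧ τ < gSigma τ (n - 1) →
      (∀ r : ℕ, r < 2 ^ (k + 1) → gSign τ (n + r) = - tmSign r) ∧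
      ((gSigma τ (n - 1) - gFun (k + 1) (n : ℝ) ≤ τ ∧ τ < gSigma τ (n - 1)) ∨
        (gSigma τ (n - 1 + 2 ^ k) ≤ τ ∧
          τ < gSigma τ (n - 1 + 2 ^ k) + gFun k ((n : ℝ) + 2 ^ k)))) := by
  have hn₁ : 1 ≤ n := le_trans (Nat.one_le_iff_ne_zero.mpr (by positivity)) hn
  have hhalf : ∀ r < 2 ^ k, r < 2 ^ (k + 1) := fun r hr => hr.trans (Nat.pow_lt_pow_succ one_lt_two)
  obtain ⟨hpos, hneg⟩ := gSign_eq_tmSign_of_window τ k hn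
  refine ⟨fun h => ⟨hpos h, ?_⟩, fun h => ⟨hneg h, ?_⟩⟩
  · exact window_dichotomy_of_tmSign hn₁ (fun r hr => hpos h r (hhalf r hr)) h
  · exact window_dichotomy_of_neg_tmSign hn₁ (fun r hr => hneg h r (hhalf r hr)) h
end
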